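/- The diversity order of the CORS scheme, d = −lim_{γ→∞} log P_out(γ)/log γ, equals |φ| where φ = {i : D_max − LK/f_i > 0}; in particular d_CORS ≤ N, with equality iff every relay satisfies f_i > LK/D_max. -/

import Mathlib

/-!
Each factor of the outage probability is `1 - exp (-a / γ)` with `a = c + c β > 0`, and since
`t ↦ 1 - exp (-a t)` has derivative `a` at `0`, it behaves like `a / γ` at high SNR. Taking
logarithms, each active relay contributes `-log γ + O(1)` to `log P_out`, so
`-log P_out / log γ` tends to the number of active relays.
-/

open Filter Real Finset Topology

lemma HasDerivAt.tendsto_mul_inv_atTop {h : ℝ → ℝ} {h' : ℝ} (hd : HasDerivAt h h' 0)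
    (h0 : h 0 = 0) : Tendsto (fun x => x * h x⁻¹) atTop (𝓝 h') := by
  have hslope := (hasDerivAt_iff_tendsto_slope.mp hd).comp
    (tendsto_inv_atTop_nhdsGT_zero.mono_right (nhdsWithin_mono _ fun _ hx => ne_of_gt hx))
  refine hslope.congr' ?_
  filter_upwards [eventually_ne_atTop 0] with x hx
  simp [slope_def_field, h0, mul_comm]

lemma tendsto_mul_one_sub_exp_neg_div_atTop (a : ℝ) :
    Tendsto (fun x => x * (1 - exp (-a / x))) atTop (𝓝 a) := by
  have hd : HasDerivAt (fun t => 1 - exp (-(a * t))) a 0 := by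
    simpa using (((hasDerivAt_id 0).const_mul a).neg.exp).const_sub 1
  simpa [neg_div, div_eq_mul_inv] using hd.tendsto_mul_inv_atTop (by simp)

lemma tendsto_log_div_log_of_tendsto_mul {g : ℝ → ℝ} {a : ℝ} (ha : a ≠ 0)
    (hg : Tendsto (fun x => x * g x) atTop (𝓝 a)) :
    Tendsto (fun x => log (g x) / log x) atTop (𝓝 (-1)) := by
  have hlog : Tendsto (fun x => log (x * g x) / log x) atTop (𝓝 0) :=
    ((continuousAt_log ha).tendsto.comp hg).div_atTop tendsto_log_atTop
  have hlim : Tendsto (fun x => log (x * g x) / log x - 1) atTop (𝓝 (-1)) := by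
    simpa using hlog.sub_const 1
  refine hlim.congr' ?_
  filter_upwards [eventually_gt_atTop 1, hg.eventually_ne ha] with x hx hxg
  have hx0 : x ≠ 0 := by positivity
  rw [log_mul hx0 (right_ne_zero_of_mul hxg), add_div, div_self (log_pos hx).ne']
  ring

lemma tendsto_log_prod_div_log {ι : Type*} (s : Finset ι) {g : ι → ℝ → ℝ} {a : ι → ℝ}
    (ha : ∀ i ∈ s, a i ≠ 0) (hg : ∀ i ∈ s, Tendsto (fun x => x * g i x) atTop (𝓝 (a i))) :
    Tendsto (fun x => log (∏ i ∈ s, g i x) / log x) atTop (𝓝 (-(#s : ℝ))) := by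
  have hsum := tendsto_finsetSum s fun i hi =>
    tendsto_log_div_log_of_tendsto_mul (ha i hi) (hg i hi)
  simp only [sum_const, nsmul_eq_mul, mul_neg_one] at hsum
  refine hsum.congr' ?_
  have hne : ∀ᶠ x in atTop, ∀ i ∈ s, g i x ≠ 0 := (s.eventually_all).2 fun i hi =>
    ((hg i hi).eventually_ne (ha i hi)).mono fun _ hx => right_ne_zero_of_mul hx
  filter_upwards [hne] with x hx
  rw [log_prod hx, sum_div]

theorem stmt_16_general (N : ℕ) (L ρ K W Dmax : ℝ)
    (hL : 0 < L) (hρ : 0 ≤ ρ) (hW : 0 < W) (hD : 0 < Dmax)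
    (f : Fin N → ℝ) (hf : ∀ i, 0 < f i) (β : Fin N → ℝ) (hβ : ∀ i, 0 < β i)
    (c : Fin N → ℝ)
    (hc : ∀ i, c i = (2 : ℝ) ^ ((L + ρ * L) / (W * (Dmax - L * K / f i))) - 1)
    (Pout : ℝ → ℝ)
    (hP : ∀ γ : ℝ, 0 < γ →
      Pout γ = ∏ i ∈ Finset.univ.filter (fun i => 0 < Dmax - L * K / f i),
        (1 - Real.exp (-(c i) / γ) * Real.exp (-(c i * β i) / γ))) :
    Filter.Tendsto (fun γ : ℝ => -(Real.log (Pout γ) / Real.log γ)) Filter.atTop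
      (nhds ((Finset.univ.filter (fun i : Fin N => 0 < Dmax - L * K / f i)).card : ℝ)) ∧
    (Finset.univ.filter (fun i : Fin N => 0 < Dmax - L * K / f i)).card ≤ N ∧
    ((Finset.univ.filter (fun i : Fin N => 0 < Dmax - L * K / f i)).card = N
      ↔ ∀ i, L * K / Dmax < f i) := by
  set S := univ.filter fun i : Fin N => 0 < Dmax - L * K / f i
  have hc_pos : ∀ i ∈ S, 0 < c i := fun i hi => by
    rw [hc i, sub_pos]
    exact one_lt_rpow one_lt_two <| div_pos (add_pos_of_pos_of_nonneg hL (by positivity))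
      (mul_pos hW (mem_filter.mp hi).2)
  have hfactor : ∀ i γ, 1 - exp (-c i / γ) * exp (-(c i * β i) / γ)
      = 1 - exp (-(c i + c i * β i) / γ) := fun i γ => by
    rw [← exp_add]; ring_nf
  refine ⟨?_, (card_filter_le _ _).trans (by simp), ?_⟩
  · have hdiv := tendsto_log_prod_div_log S (a := fun i => c i + c i * β i)
      (fun i hi => (add_pos (hc_pos i hi) (mul_pos (hc_pos i hi) (hβ i))).ne')
      (fun i _ => by simpa only [hfactor] using tendsto_mul_one_sub_exp_neg_div_atTop _)
    have hneg := hdiv.neg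
    rw [neg_neg] at hneg
    refine hneg.congr' ?_
    filter_upwards [eventually_gt_atTop 0] with γ hγ
    simp only [hP γ hγ, hfactor]
  · have hcond : ∀ i, 0 < Dmax - L * K / f i ↔ L * K / Dmax < f i := fun i => by
      rw [sub_pos, div_lt_iff₀ (hf i), div_lt_iff₀ hD, mul_comm Dmax]
    simpa [S, hcond] using card_filter_eq_iff (s := univ) (p := fun i => 0 < Dmax - L * K / f i)

theorem stmt_16 (N : ℕ) (L ρ K W Dmax : ℝ)
    (hL : 0 < L) (hρ : 0 ≤ ρ) (hK : 0 < K) (hW : 0 < W) (hD : 0 < Dmax)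
    (f : Fin N → ℝ) (hf : ∀ i, 0 < f i) (β : Fin N → ℝ) (hβ : ∀ i, 0 < β i)
    (c : Fin N → ℝ)
    (hc : ∀ i, c i = (2 : ℝ) ^ ((L + ρ * L) / (W * (Dmax - L * K / f i))) - 1)
    (Pout : ℝ → ℝ)
    (hP : ∀ γ : ℝ, 0 < γ →
      Pout γ = ∏ i ∈ Finset.univ.filter (fun i => 0 < Dmax - L * K / f i),
        (1 - Real.exp (-(c i) / γ) * Real.exp (-(c i * β i) / γ))) :
    Filter.Tendsto (fun γ : ℝ => -(Real.log (Pout γ) / Real.log γ)) Filter.atTop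
      (nhds ((Finset.univ.filter (fun i : Fin N => 0 < Dmax - L * K / f i)).card : ℝ)) ∧
    (Finset.univ.filter (fun i : Fin N => 0 < Dmax - L * K / f i)).card ≤ N ∧
    ((Finset.univ.filter (fun i : Fin N => 0 < Dmax - L * K / f i)).card = N
      ↔ ∀ i, L * K / Dmax < f i) :=
  stmt_16_general N L ρ K W Dmax hL hρ hW hD f hf β hβ c hc Pout hP
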